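/- arXiv:1808.09038 — 6 statements merged into one kernel-verified Lean document; each statement's English description precedes it below -/
import Mathlib

section
/- Suppose the scenario set σ contains the no-contingency scenario s₀ (i.e., ζ(s₀)_i = 1 for all i ∈ I). Then the worst-case expected load shedding over the ambiguity set equals the optimal value of the dual min–max problem: sup_{p ∈ D} Σ_{s∈σ} p(s)·Q(s) = inf over all β : I → ℝ with β_i ≥ 0 for all i of max_{s∈σ} [ Q(s) + Σ_{i∈I} (μ_i + ζ(s)_i − 1)·β_i ]; moreover both the supremum and the infimum are attained. -/
/-!
The primal problem is a linear program over a compact polytope that contains the point mass at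
the no-contingency scenario, so its maximum `v` is attained. Weak duality is the usual Lagrangian
bound. For the reverse inequality, normalising shows that every nonnegative `p` with
`∑ s, p s * (1 - ζ s i) ≤ (∑ s, p s) * μ i` satisfies `∑ s, p s * (Q s - v) ≤ 0`, and Farkas'
lemma turns this into multipliers `β ≥ 0` with `Q s + ∑ i, (μ i + ζ s i - 1) * β i ≤ v` for all
`s`. Farkas' lemma itself is hyperplane separation from a finitely generated cone, which is
closed because, by the conic Carathéodory theorem, it is a finite union of images of the
nonnegative orthant under injective linear maps.
-/

open Finset Matrix

section ConicCaratheodory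

variable {ι E : Type*} [Fintype ι] [AddCommGroup E] [Module ℝ E]

lemma exists_nonneg_repr_card_support_lt (v : ι → E) {y c : ι → ℝ} (hy : 0 ≤ y)
    (hc : ∑ i, c i • v i = 0) (hcy : ∀ i, y i = 0 → c i = 0) (hpos : ∃ i, 0 < c i) :
    ∃ z : ι → ℝ, 0 ≤ z ∧ ∑ i, z i • v i = ∑ i, y i • v i ∧
      #{i | z i ≠ 0} < #{i | y i ≠ 0} := by
  classical
  obtain ⟨i₀, hi₀, hmin⟩ :=
    ({i | 0 < c i} : Finset ι).exists_min_image (fun i => y i / c i) (by simpa [Finset.Nonempty])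
  simp only [mem_filter, mem_univ, true_and] at hi₀ hmin
  -- the largest step along `-c` that keeps `y` nonnegative; it kills the coordinate `i₀`
  set t := y i₀ / c i₀ with ht_def
  have ht : 0 ≤ t := div_nonneg (hy i₀) hi₀.le
  have hzi₀ : y i₀ - t * c i₀ = 0 := by rw [ht_def, div_mul_cancel₀ _ hi₀.ne']; ring
  refine ⟨y - t • c, fun i => ?_, ?_, card_lt_card ?_⟩
  · have hti : t * c i ≤ y i := by
      rcases lt_or_ge 0 (c i) with h | h
      · exact (le_div_iff₀ h).1 (hmin i h)
      · exact (mul_nonpos_of_nonneg_of_nonpos ht h).trans (hy i)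
    simpa using hti
  · simp [sub_smul, sum_sub_distrib, mul_smul, ← smul_sum, hc]
  · refine (ssubset_iff_of_subset fun i hi => ?_).2 ⟨i₀, ?_, ?_⟩
    · simp only [mem_filter, mem_univ, true_and, Pi.sub_apply, Pi.smul_apply, smul_eq_mul]
        at hi ⊢
      exact fun hyi => hi (by simp [hyi, hcy i hyi])
    · simp only [mem_filter, mem_univ, true_and]
      exact fun hyi => hi₀.ne' (hcy i₀ hyi)
    · simpa using hzi₀

theorem exists_linearIndepOn_nonneg_repr (v : ι → E) (y : ι → ℝ) (hy : 0 ≤ y) :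
    ∃ T : Finset ι, LinearIndepOn ℝ v (T : Set ι) ∧
      ∃ w : T → ℝ, 0 ≤ w ∧ ∑ t, w t • v t = ∑ i, y i • v i := by
  classical
  induction hn : #{i | y i ≠ 0} using Nat.strong_induction_on generalizing y with
  | _ n ih =>
  by_cases hS : LinearIndepOn ℝ v (({i | y i ≠ 0} : Finset ι) : Set ι)
  · refine ⟨_, hS, fun t => y t, fun t => hy t, ?_⟩
    rw [sum_coe_sort _ (fun i => y i • v i)]
    exact sum_filter_of_ne fun i _ h hyi => h (by simp [hyi])
  · obtain ⟨f, hf, i₀, hi₀, hfi₀⟩ := not_linearIndepOn_finset_iff.1 hS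
    set c : ι → ℝ := fun i => if y i ≠ 0 then f i₀ * f i else 0
    have hc : ∑ i, c i • v i = 0 := by
      simp only [c, ite_smul, zero_smul, mul_smul, ← sum_filter, ← smul_sum, hf, smul_zero]
    have hcy : ∀ i, y i = 0 → c i = 0 := fun i hi => by simp [c, hi]
    have hpos : 0 < c i₀ := by simpa [c, (mem_filter.1 hi₀).2] using hfi₀
    obtain ⟨z, hz, hzsum, hzcard⟩ := exists_nonneg_repr_card_support_lt v hy hc hcy ⟨i₀, hpos⟩
    obtain ⟨T, hT, w, hw, hwsum⟩ := ih _ (hn ▸ hzcard) z hz rfl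
    exact ⟨T, hT, w, hw, hwsum.trans hzsum⟩

lemma PointedCone.mem_hull_range_iff_exists_nonneg {v : ι → E} {x : E} :
    x ∈ PointedCone.hull ℝ (Set.range v) ↔ ∃ y : ι → ℝ, 0 ≤ y ∧ ∑ i, y i • v i = x := by
  rw [PointedCone.hull, Submodule.mem_span_range_iff_exists_fun]
  constructor
  · rintro ⟨c, rfl⟩
    exact ⟨fun i => c i, fun i => (c i).2, rfl⟩
  · rintro ⟨y, hy, rfl⟩
    exact ⟨fun i => ⟨y i, hy i⟩, rfl⟩

end ConicCaratheodory

section FiniteCone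

variable {ι E : Type*} [Fintype ι] [AddCommGroup E] [Module ℝ E] [TopologicalSpace E]
  [IsTopologicalAddGroup E] [ContinuousSMul ℝ E] [T2Space E]

lemma LinearIndependent.isClosed_linearCombination_image_Ici {v : ι → E}
    (hv : LinearIndependent ℝ v) :
    IsClosed (Fintype.linearCombination ℝ v '' Set.Ici 0) :=
  (LinearMap.isClosedEmbedding_of_injective
    (LinearMap.ker_eq_bot.2 hv.fintypeLinearCombination_injective)).isClosedMap _ isClosed_Ici

theorem PointedCone.isClosed_hull_range (v : ι → E) :
    IsClosed (PointedCone.hull ℝ (Set.range v) : Set E) := by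
  classical
  have hunion : (PointedCone.hull ℝ (Set.range v) : Set E) =
      ⋃ T ∈ {T : Finset ι | LinearIndepOn ℝ v (T : Set ι)},
        Fintype.linearCombination ℝ (fun t : T => v t) '' Set.Ici 0 := by
    ext x
    simp only [SetLike.mem_coe, PointedCone.mem_hull_range_iff_exists_nonneg, Set.mem_iUnion,
      Set.mem_image, Fintype.linearCombination_apply, Set.mem_Ici, Set.mem_ofPred_eq, exists_prop]
    constructor
    · rintro ⟨y, hy, rfl⟩
      exact exists_linearIndepOn_nonneg_repr v y hy
    · rintro ⟨T, -, w, hw, rfl⟩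
      refine ⟨fun i => if h : i ∈ T then w ⟨i, h⟩ else 0, fun i => ?_, ?_⟩
      · by_cases h : i ∈ T
        · simpa [h] using hw ⟨i, h⟩
        · simp [h]
      · rw [← sum_subset (subset_univ T) (fun i _ h => by simp [h]), ← sum_coe_sort T]
        simp
  rw [hunion]
  exact (Set.toFinite _).isClosed_biUnion fun T hT => hT.isClosed_linearCombination_image_Ici

variable [LocallyConvexSpace ℝ E]

theorem exists_strongDual_nonneg_of_notMem_hull_range (v : ι → E) {x : E}
    (hx : x ∉ PointedCone.hull ℝ (Set.range v)) :
    ∃ f : StrongDual ℝ E, (∀ i, 0 ≤ f (v i)) ∧ f x < 0 := by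
  let C : ProperCone ℝ E := ⟨PointedCone.hull ℝ (Set.range v), PointedCone.isClosed_hull_range v⟩
  obtain ⟨f, hf, hfx⟩ := C.hyperplane_separation_point hx
  exact ⟨f, fun i => hf _ (PointedCone.subset_hull ⟨i, rfl⟩), hfx⟩

end FiniteCone

lemma StrongDual.apply_eq_sum_mul_single {σ : Type*} [Fintype σ] [DecidableEq σ]
    (f : StrongDual ℝ (σ → ℝ)) (x : σ → ℝ) : f x = ∑ s, x s * f (Pi.single s 1) := by
  calc f x = f (∑ s, x s • Pi.single s 1) := by congr 1; ext j; simp [Pi.single_apply]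
    _ = ∑ s, x s * f (Pi.single s 1) := by simp

theorem Matrix.exists_nonneg_le_mulVec {σ I : Type*} [Fintype σ] [Fintype I]
    (M : Matrix σ I ℝ) (q : σ → ℝ) (h : ∀ p, 0 ≤ p → p ᵥ* M ≤ 0 → p ⬝ᵥ q ≤ 0) :
    ∃ β, 0 ≤ β ∧ q ≤ M *ᵥ β := by
  classical
  -- `q` lies in the cone spanned by the columns of `M` and the vectors `-eₛ` iff `q ≤ M *ᵥ β`
  -- for some `β ≥ 0`
  let v : I ⊕ σ → σ → ℝ := Sum.elim M.col fun s => -Pi.single s 1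
  by_cases hq : q ∈ PointedCone.hull ℝ (Set.range v)
  · obtain ⟨y, hy, rfl⟩ := PointedCone.mem_hull_range_iff_exists_nonneg.1 hq
    refine ⟨fun i => y (.inl i), fun i => hy _, fun s => ?_⟩
    simpa [v, Fintype.sum_sum_type, Pi.single_apply, mulVec, dotProduct, mul_comm]
      using hy (.inr s)
  · obtain ⟨f, hf, hfq⟩ := exists_strongDual_nonneg_of_notMem_hull_range v hq
    have hp : 0 ≤ fun s => -f (Pi.single s 1) := fun s => by simpa [v] using hf (.inr s)
    have hpM : (fun s => -f (Pi.single s 1)) ᵥ* M ≤ 0 := fun i => by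
      simpa [v, StrongDual.apply_eq_sum_mul_single f (M.col i), vecMul, dotProduct, mul_comm]
        using hf (.inl i)
    have hpq := h _ hp hpM
    simp only [dotProduct, neg_mul, sum_neg_distrib, neg_nonpos] at hpq
    simp only [StrongDual.apply_eq_sum_mul_single f q, mul_comm (q _)] at hfq
    linarith

section MomentAmbiguity

variable {σ I : Type*} [Fintype σ] (A : σ → I → ℝ) (b : I → ℝ) (Q : σ → ℝ)

def ambiguitySet : Set (σ → ℝ) :=
  {p | (∀ s, 0 ≤ p s) ∧ ∑ s, p s = 1 ∧ ∀ i, ∑ s, p s * A s i ≤ b i}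

lemma isCompact_ambiguitySet : IsCompact (ambiguitySet A b) := by
  have hclosed : IsClosed (ambiguitySet A b) :=
    (isClosed_Ici (a := (0 : σ → ℝ))).inter <|
      (isClosed_eq (by fun_prop) continuous_const).inter <|
        isClosed_le (f := fun (p : σ → ℝ) i => ∑ s, p s * A s i) (by fun_prop) continuous_const
  refine (isCompact_univ_pi fun _ => isCompact_Icc (a := (0 : ℝ)) (b := 1)).of_isClosed_subset
    hclosed ?_
  rintro p ⟨hp0, hp1, -⟩ s -
  exact ⟨hp0 s, hp1 ▸ single_le_sum (fun t _ => hp0 t) (mem_univ s)⟩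

variable {A b}

lemma sum_mul_le_sum_mul_of_forall_le {v : ℝ}
    (hv : ∀ p ∈ ambiguitySet A b, ∑ s, p s * Q s ≤ v) {p : σ → ℝ} (hp0 : 0 ≤ p)
    (hpA : ∀ i, ∑ s, p s * A s i ≤ (∑ s, p s) * b i) :
    ∑ s, p s * Q s ≤ (∑ s, p s) * v := by
  rcases (sum_nonneg fun s _ => hp0 s : 0 ≤ ∑ s, p s).eq_or_lt with ht | ht
  · have hp : p = 0 :=
      funext fun s => (sum_eq_zero_iff_of_nonneg fun s _ => hp0 s).1 ht.symm s (mem_univ s)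
    simp [hp]
  · have hmem : (∑ s, p s)⁻¹ • p ∈ ambiguitySet A b := by
      refine ⟨fun s => mul_nonneg (inv_nonneg.2 ht.le) (hp0 s), ?_, fun i => ?_⟩
      · simp [← mul_sum, inv_mul_cancel₀ ht.ne']
      · simpa [mul_assoc, ← mul_sum, inv_mul_le_iff₀ ht] using hpA i
    simpa [mul_assoc, ← mul_sum, inv_mul_le_iff₀ ht] using hv _ hmem

variable [Fintype I]

theorem sum_mul_le_ciSup_of_mem_ambiguitySet {p : σ → ℝ} (hp : p ∈ ambiguitySet A b)
    {β : I → ℝ} (hβ : ∀ i, 0 ≤ β i) :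
    ∑ s, p s * Q s ≤ ⨆ s, (Q s + ∑ i, (b i - A s i) * β i) := by
  obtain ⟨hp0, hp1, hpA⟩ := hp
  calc ∑ s, p s * Q s
      ≤ ∑ s, p s * Q s + ∑ i, (b i - ∑ s, p s * A s i) * β i := by
        have := sum_nonneg fun i (_ : i ∈ univ) => mul_nonneg (sub_nonneg.2 (hpA i)) (hβ i)
        linarith
    _ = ∑ s, p s * (Q s + ∑ i, (b i - A s i) * β i) := by
        simp only [mul_add, sum_add_distrib, Finset.mul_sum]
        rw [sum_comm]
        congr 1
        refine sum_congr rfl fun i _ => ?_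
        simp only [sub_mul, mul_sub, sum_sub_distrib, ← mul_assoc, ← sum_mul, hp1, one_mul]
    _ ≤ ∑ s, p s * ⨆ t, (Q t + ∑ i, (b i - A t i) * β i) := by
        gcongr with s
        · exact hp0 s
        · exact le_ciSup (Finite.bddAbove_range fun t => Q t + ∑ i, (b i - A t i) * β i) s
    _ = ⨆ s, (Q s + ∑ i, (b i - A s i) * β i) := by rw [← sum_mul, hp1, one_mul]

theorem exists_dual_le_of_forall_le {v : ℝ}
    (hv : ∀ p ∈ ambiguitySet A b, ∑ s, p s * Q s ≤ v) :
    ∃ β : I → ℝ, (∀ i, 0 ≤ β i) ∧ ∀ s, Q s + ∑ i, (b i - A s i) * β i ≤ v := by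
  have hfarkas : ∀ p : σ → ℝ, 0 ≤ p → p ᵥ* Matrix.of (fun s i => A s i - b i) ≤ 0 →
      p ⬝ᵥ (fun s => Q s - v) ≤ 0 := by
    intro p hp0 hpA
    have := sum_mul_le_sum_mul_of_forall_le Q hv hp0 fun i => by
      simpa [vecMul, dotProduct, mul_sub, sum_mul] using hpA i
    simpa [dotProduct, mul_sub, sum_mul] using this
  obtain ⟨β, hβ, hle⟩ := Matrix.exists_nonneg_le_mulVec _ _ hfarkas
  refine ⟨β, hβ, fun s => ?_⟩
  have hs := hle s
  simp only [mulVec, dotProduct, of_apply, sub_mul, sum_sub_distrib] at hs ⊢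
  linarith

theorem exists_isGreatest_isLeast_of_nonempty_ambiguitySet
    (hD : (ambiguitySet A b).Nonempty) :
    ∃ v : ℝ,
      IsGreatest {x : ℝ | ∃ p ∈ ambiguitySet A b, x = ∑ s, p s * Q s} v ∧
      IsLeast {x : ℝ | ∃ β : I → ℝ, (∀ i, 0 ≤ β i) ∧
        x = ⨆ s : σ, (Q s + ∑ i, (b i - A s i) * β i)} v := by
  obtain ⟨p, hp, hmax⟩ := (isCompact_ambiguitySet A b).exists_isMaxOn hD
    (f := fun p => ∑ s, p s * Q s) (by fun_prop)
  obtain ⟨β, hβ, hβle⟩ := exists_dual_le_of_forall_le Q fun p' hp' => hmax hp'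
  have : Nonempty σ := by
    by_contra h
    simpa [not_nonempty_iff.1 h] using hp.2.1
  refine ⟨_, ⟨⟨p, hp, rfl⟩, ?_⟩, ⟨β, hβ, ?_⟩, ?_⟩
  · rintro _ ⟨p', hp', rfl⟩
    exact hmax hp'
  · exact le_antisymm (sum_mul_le_ciSup_of_mem_ambiguitySet Q hp hβ) (ciSup_le hβle)
  · rintro _ ⟨β', hβ', rfl⟩
    exact sum_mul_le_ciSup_of_mem_ambiguitySet Q hp hβ'

end MomentAmbiguity

theorem stmt_0_general
    {I σ : Type*} [Fintype I] [Fintype σ]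
    (ζ : σ → I → ℝ)
    (Q : σ → ℝ) (μ : I → ℝ) (hμ : ∀ i, 0 ≤ μ i)
    (D : Set (σ → ℝ))
    (hD : D = {p : σ → ℝ | (∀ s, 0 ≤ p s) ∧ (∑ s, p s) = 1 ∧
        ∀ i, (∑ s, p s * (1 - ζ s i)) ≤ μ i})
    (s₀ : σ) (hs₀ : ∀ i, ζ s₀ i = 1) :
    ∃ v : ℝ,
      IsGreatest {x : ℝ | ∃ p ∈ D, x = ∑ s, p s * Q s} v ∧
      IsLeast {x : ℝ | ∃ β : I → ℝ, (∀ i, 0 ≤ β i) ∧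
        x = ⨆ s : σ, (Q s + ∑ i, (μ i + ζ s i - 1) * β i)} v := by
  classical
  have hp₀ : Pi.single s₀ 1 ∈ ambiguitySet (fun s i => 1 - ζ s i) μ :=
    ⟨fun s => by by_cases h : s = s₀ <;> simp [h], by simp,
      fun i => by simp [Pi.single_apply, hs₀, hμ]⟩
  subst hD
  simpa only [ambiguitySet, sub_sub_eq_add_sub] using
    exists_isGreatest_isLeast_of_nonempty_ambiguitySet Q ⟨_, hp₀⟩

/-- Strong duality (Proposition 1) for the moment-based ambiguity set:
the worst-case expected load shedding equals the optimal value of the dual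
min–max problem, and both the supremum and the infimum are attained. -/
theorem stmt_0
    {I σ : Type*} [Fintype I] [Fintype σ] [Nonempty I] [Nonempty σ]
    (ζ : σ → I → ℝ) (hζ : ∀ s i, ζ s i = 0 ∨ ζ s i = 1)
    (Q : σ → ℝ) (μ : I → ℝ) (hμ : ∀ i, 0 ≤ μ i)
    (D : Set (σ → ℝ))
    (hD : D = {p : σ → ℝ | (∀ s, 0 ≤ p s) ∧ (∑ s, p s) = 1 ∧
        ∀ i, (∑ s, p s * (1 - ζ s i)) ≤ μ i})
    (s₀ : σ) (hs₀ : ∀ i, ζ s₀ i = 1) :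
    ∃ v : ℝ,
      IsGreatest {x : ℝ | ∃ p ∈ D, x = ∑ s, p s * Q s} v ∧
      IsLeast {x : ℝ | ∃ β : I → ℝ, (∀ i, 0 ≤ β i) ∧
        x = ⨆ s : σ, (Q s + ∑ i, (μ i + ζ s i - 1) * β i)} v :=
  stmt_0_general ζ Q μ hμ D hD s₀ hs₀
end

section
/- Suppose the scenario set σ contains the no-contingency scenario s₀ (i.e., ζ(s₀)_i = 1 for all i ∈ I). Then sup_{p ∈ D} Σ_{s∈σ} p(s)·Q(s) equals the minimum of γ + Σ_{i∈I} μ_i·β_i over all γ ∈ ℝ and β : I → ℝ with β_i ≥ 0 for all i that satisfy γ + Σ_{i∈I} (1 − ζ(s)_i)·β_i ≥ Q(s) for every scenario s ∈ σ; moreover this minimum is attained. -/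
/-!
Weak duality is the usual chain `p ⬝ᵥ Q ≤ p ⬝ᵥ (γ + A β) = γ + (pA) ⬝ᵥ β ≤ γ + μ ⬝ᵥ β`, with
`A s i = 1 - ζ s i` the failure matrix. For strong duality, a constraint `i` with `μ i = 0` merely
forbids the scenarios failing `i`. On the remaining scenarios and constraints the no-contingency
scenario is a Slater point, so separating `(sup, μ)` from the open convex set of points strictly
dominated by some `(p ⬝ᵥ Q, pA)` yields Lagrange multipliers. The multipliers of the constraints
with `μ i = 0` are then chosen so large that the forbidden scenarios become dual feasible too;
they cost nothing in the objective.
-/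

open Matrix Set Pointwise

lemma nonpos_of_forall_pos_add_mul_lt {x y c : ℝ} (h : ∀ t > 0, x + t * y < c) : y ≤ 0 := by
  by_contra! hy
  have := h ((|c - x| + 1) / y) (by positivity)
  rw [div_mul_cancel₀ _ hy.ne'] at this
  linarith [le_abs_self (c - x)]

lemma le_of_forall_pos_add_mul_lt {x y c : ℝ} (h : ∀ t > 0, x + t * y < c) : x ≤ c := by
  have hlim : Filter.Tendsto (fun t : ℝ => x + t * y) (nhdsWithin 0 (Ioi 0)) (nhds x) := by
    apply tendsto_nhdsWithin_of_tendsto_nhds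
    simpa using ((continuous_id.mul continuous_const).const_add x).tendsto (0 : ℝ)
  exact le_of_tendsto hlim (eventually_nhdsWithin_of_forall fun t ht => (h t ht).le)

theorem Fintype.sum_subtype_eq_sum {ι M : Type*} [Fintype ι] [AddCommMonoid M] (p : ι → Prop)
    [DecidablePred p] (f : ι → M) (hf : ∀ i, ¬ p i → f i = 0) :
    ∑ i : {i // p i}, f i = ∑ i, f i := by
  rw [← Fintype.sum_subtype_add_sum_subtype p f,
    Finset.sum_eq_zero fun (i : {i // ¬ p i}) _ => hf i i.2, add_zero]

lemma ContinuousLinearMap.exists_eq_mul_fst_add_dotProduct_snd {J : Type*} [Fintype J]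
    (f : ℝ × (J → ℝ) →L[ℝ] ℝ) : ∃ (a : ℝ) (b : J → ℝ), ∀ x, f x = a * x.1 + b ⬝ᵥ x.2 := by
  classical
  refine ⟨f (1, 0), fun j => f (0, Pi.single j 1), fun x => ?_⟩
  have hx : x = x.1 • ((1 : ℝ), (0 : J → ℝ)) + ∑ j, x.2 j • ((0 : ℝ), (Pi.single j 1 : J → ℝ)) := by
    ext
    · simp [Prod.fst_sum]
    · simp [Prod.snd_sum, Finset.sum_apply, Pi.single_apply]
  conv_lhs => rw [hx]
  simp only [map_add, map_sum, map_smul, smul_eq_mul, dotProduct, mul_comm]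

namespace Matrix

variable {S J : Type*} {A : Matrix S J ℝ} {Q : S → ℝ} {μ : J → ℝ} {V : ℝ}

theorem le_add_mulVec_of_ne_zero [Fintype J] (hA : ∀ s j, 0 ≤ A s j) {β : J → ℝ} (hβ : 0 ≤ β)
    {s : S} {j : J} (hAj : A s j ≠ 0) {γ : ℝ} (hj : |Q s - γ| / A s j ≤ β j) : Q s ≤ γ + (A *ᵥ β) s :=
  calc Q s ≤ γ + |Q s - γ| := by linarith [le_abs_self (Q s - γ)]
    _ = γ + A s j * (|Q s - γ| / A s j) := by rw [mul_div_cancel₀ _ hAj]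
    _ ≤ γ + A s j * β j := by gcongr; exact hA s j
    _ ≤ γ + (A *ᵥ β) s := by
      gcongr
      exact Finset.single_le_sum (fun i _ => mul_nonneg (hA s i) (hβ i)) (Finset.mem_univ j)

variable [Fintype S]

theorem dotProduct_le_of_vecMul_submatrix_le {P : S → Prop} {R : J → Prop} [DecidablePred P]
    [DecidablePred R]
    (hPR : ∀ s, P s → ∀ j, ¬ R j → A s j = 0) (hμ : 0 ≤ μ)
    (hV : ∀ p ∈ stdSimplex ℝ S, p ᵥ* A ≤ μ → p ⬝ᵥ Q ≤ V) :
    ∀ p' ∈ stdSimplex ℝ {s // P s}, p' ᵥ* A.submatrix (↑) ((↑) : {j // R j} → J) ≤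
      (fun j : {j // R j} => μ j) → (p' ⬝ᵥ fun s => Q s) ≤ V := by
  intro p' hp' hp'A
  set p : S → ℝ := fun s => if h : P s then p' ⟨s, h⟩ else 0
  have hp : ∀ c : S → ℝ, p ⬝ᵥ c = p' ⬝ᵥ fun s => c s := fun c =>
    (Fintype.sum_subtype_eq_sum _ (fun s => p s * c s) fun s hs => by simp [p, hs]).symm.trans
      (Finset.sum_congr rfl fun s _ => by simp only [p, dif_pos s.2])
  refine (hp Q).symm.trans_le (hV p ⟨fun s => ?_, ?_⟩ fun j => ?_)
  · simp only [p]
    split_ifs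
    exacts [hp'.1 _, le_rfl]
  · rw [← dotProduct_one, hp, ← hp'.2, ← dotProduct_one]
    rfl
  · change p ⬝ᵥ (fun s => A s j) ≤ μ j
    rw [hp]
    by_cases hj : R j
    · exact hp'A ⟨j, hj⟩
    · simpa [fun s : {s // P s} => hPR s s.2 j hj] using hμ j

variable [Fintype J]

theorem dotProduct_le_of_dual_feasible {p : S → ℝ} (hp : p ∈ stdSimplex ℝ S) (hpA : p ᵥ* A ≤ μ)
    {γ : ℝ} {β : J → ℝ} (hβ : 0 ≤ β) (hQ : ∀ s, Q s ≤ γ + (A *ᵥ β) s) :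
    p ⬝ᵥ Q ≤ γ + μ ⬝ᵥ β :=
  calc p ⬝ᵥ Q ≤ p ⬝ᵥ (γ • 1 + A *ᵥ β) :=
        dotProduct_le_dotProduct_of_nonneg_left (fun s => by simpa using hQ s) hp.1
    _ = γ + (p ᵥ* A) ⬝ᵥ β := by
        rw [dotProduct_add, dotProduct_mulVec, dotProduct_smul, dotProduct_one, hp.2, smul_eq_mul,
          mul_one]
    _ ≤ γ + μ ⬝ᵥ β := by gcongr; exact dotProduct_le_dotProduct_of_nonneg_right hpA hβ

theorem exists_mul_add_dotProduct_lt (hV : ∀ p ∈ stdSimplex ℝ S, p ᵥ* A ≤ μ → p ⬝ᵥ Q ≤ V) :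
    ∃ (a : ℝ) (b : J → ℝ), ∀ p ∈ stdSimplex ℝ S, ∀ t u, t < p ⬝ᵥ Q → (∀ j, (p ᵥ* A) j < u j) →
      a * t + b ⬝ᵥ u < a * V + b ⬝ᵥ μ := by
  set K : Set (ℝ × (J → ℝ)) := (fun p => (p ⬝ᵥ Q, p ᵥ* A)) '' stdSimplex ℝ S
  set O : Set (ℝ × (J → ℝ)) := Iio 0 ×ˢ univ.pi fun _ => Ioi 0
  have hK : Convex ℝ K := (convex_stdSimplex ℝ S).is_linear_image
    ⟨fun p q => by simp [add_vecMul], fun c p => by simp [smul_vecMul]⟩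
  have hO : IsOpen O := isOpen_Iio.prod (isOpen_set_pi finite_univ fun _ _ => isOpen_Ioi)
  have hO' : Convex ℝ O := (convex_Iio 0).prod (convex_pi fun _ _ => convex_Ioi 0)
  have hVμ : (V, μ) ∉ K + O := by
    rintro ⟨_, ⟨p, hp, rfl⟩, o, ⟨ho₁, ho₂⟩, hpo⟩
    simp only [Prod.ext_iff, Prod.fst_add, Prod.snd_add] at hpo
    have hpA : p ᵥ* A ≤ μ := fun j => by
      have := ho₂ j (mem_univ j)
      have := congrFun hpo.2 j
      simp only [Pi.add_apply, mem_Ioi] at *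
      linarith
    have : o.1 < 0 := ho₁
    linarith [hpo.1, hV p hp hpA]
  obtain ⟨f, hf⟩ := geometric_hahn_banach_open_point (hK.add hO') hO.add_left hVμ
  obtain ⟨a, b, hab⟩ := f.exists_eq_mul_fst_add_dotProduct_snd
  refine ⟨a, b, fun p hp t u ht hu => ?_⟩
  have := hf (t, u) ⟨_, ⟨p, hp, rfl⟩, (t - p ⬝ᵥ Q, u - p ᵥ* A),
    ⟨by simpa using ht, fun j _ => by simpa using hu j⟩, by simp⟩
  simpa [hab] using this

theorem exists_dual_of_slater (hV : ∀ p ∈ stdSimplex ℝ S, p ᵥ* A ≤ μ → p ⬝ᵥ Q ≤ V)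
    {p₀ : S → ℝ} (hp₀ : p₀ ∈ stdSimplex ℝ S) (hslater : ∀ j, (p₀ ᵥ* A) j < μ j) :
    ∃ β, 0 ≤ β ∧ ∀ s, Q s ≤ V - μ ⬝ᵥ β + (A *ᵥ β) s := by
  classical
  obtain ⟨a, b, hsep⟩ := exists_mul_add_dotProduct_lt hV
  set C := a * V + b ⬝ᵥ μ
  have hb : 0 ≤ -b := fun j => neg_nonneg.2 <| nonpos_of_forall_pos_add_mul_lt (c := C)
    (x := a * (p₀ ⬝ᵥ Q - 1) + b ⬝ᵥ (p₀ ᵥ* A + 1)) fun r hr => by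
      have := hsep p₀ hp₀ (p₀ ⬝ᵥ Q - 1) (p₀ ᵥ* A + 1 + r • Pi.single j 1) (by linarith) fun i => by
        rcases eq_or_ne i j with rfl | hij <;> simp [*]; linarith
      simpa [dotProduct_add, dotProduct_smul, dotProduct_single, add_assoc, mul_comm] using this
  -- Slater's condition is what makes `a` positive.
  have ha : 0 < a := by
    have := hsep p₀ hp₀ (p₀ ⬝ᵥ Q - 1) μ (by linarith) hslater
    have := hV p₀ hp₀ fun j => (hslater j).le
    nlinarith
  have hbound : ∀ p ∈ stdSimplex ℝ S, a * (p ⬝ᵥ Q) + b ⬝ᵥ (p ᵥ* A) ≤ C := fun p hp =>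
    le_of_forall_pos_add_mul_lt (y := b ⬝ᵥ 1 - a) fun r hr => by
      have := hsep p hp (p ⬝ᵥ Q - r) (p ᵥ* A + r • 1) (by linarith) fun j => by simpa using hr
      simp only [dotProduct_add, dotProduct_smul, smul_eq_mul] at this
      linarith
  refine ⟨a⁻¹ • -b, smul_nonneg (inv_nonneg.2 ha.le) hb, fun s => ?_⟩
  have := hbound (Pi.single s 1) (single_mem_stdSimplex ℝ s)
  rw [single_one_dotProduct, single_one_vecMul, row_def] at this
  have hβ : ∀ v : J → ℝ, a * (v ⬝ᵥ a⁻¹ • -b) = -(b ⬝ᵥ v) := fun v => by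
    rw [dotProduct_smul, dotProduct_neg, dotProduct_comm, smul_eq_mul, ← mul_assoc,
      mul_inv_cancel₀ ha.ne', one_mul]
  refine le_of_mul_le_mul_left ?_ ha
  rw [mul_add, mul_sub, mulVec, hβ, hβ]
  linarith

theorem exists_dual_of_nonneg_of_row_eq_zero (hA : ∀ s j, 0 ≤ A s j) (hμ : 0 ≤ μ) {s₀ : S}
    (hs₀ : ∀ j, A s₀ j = 0) (hV : ∀ p ∈ stdSimplex ℝ S, p ᵥ* A ≤ μ → p ⬝ᵥ Q ≤ V) :
    ∃ β, 0 ≤ β ∧ ∀ s, Q s ≤ V - μ ⬝ᵥ β + (A *ᵥ β) s := by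
  classical
  have hV' := dotProduct_le_of_vecMul_submatrix_le (P := fun s => ∀ j, μ j = 0 → A s j = 0)
    (R := fun j => ¬ μ j = 0) (fun s hs j hj => hs j (not_not.1 hj)) hμ hV
  obtain ⟨β', hβ', hQ'⟩ := exists_dual_of_slater hV'
    (single_mem_stdSimplex ℝ ⟨s₀, fun j _ => hs₀ j⟩) fun j => by
      rw [single_one_vecMul]
      exact (hs₀ j).trans_lt (lt_of_le_of_ne (hμ j) (Ne.symm j.2))
  set γ := V - (fun j : {j // ¬ μ j = 0} => μ j) ⬝ᵥ β'
  -- Large enough to make every scenario that fails a constraint with `μ j = 0` dual feasible;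
  -- the terms with `A s j = 0` are `0` by the convention `x / 0 = 0`.
  set M := ∑ s, ∑ j, |Q s - γ| / A s j
  set β : J → ℝ := fun j => if h : μ j = 0 then M else β' ⟨j, h⟩
  have hβ : ∀ c : J → ℝ, (∀ j, μ j = 0 → c j = 0) →
      c ⬝ᵥ β = (fun j : {j // ¬ μ j = 0} => c j) ⬝ᵥ β' :=
    fun c hc => (Fintype.sum_subtype_eq_sum _ (fun j => c j * β j) fun j hj => by
      simp [hc j (not_not.1 hj)]).symm.trans (Finset.sum_congr rfl fun j _ => by simp [β, j.2])
  have hβ_nonneg : 0 ≤ β := fun j => by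
    simp only [β]
    split_ifs
    exacts [Finset.sum_nonneg fun s _ => Finset.sum_nonneg fun j _ =>
      div_nonneg (abs_nonneg _) (hA s j), hβ' _]
  refine ⟨β, hβ_nonneg, fun s => ?_⟩
  rw [hβ μ fun j hj => hj]
  by_cases hs : ∀ j, μ j = 0 → A s j = 0
  · rw [mulVec, hβ _ hs]
    exact hQ' ⟨s, hs⟩
  push Not at hs
  obtain ⟨j, hj, hAj⟩ := hs
  have hjM : |Q s - γ| / A s j ≤ β j := by
    rw [show β j = M from dif_pos hj]
    exact (Finset.single_le_sum (fun j _ => div_nonneg (abs_nonneg _) (hA s j))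
      (Finset.mem_univ j)).trans (Finset.single_le_sum (f := fun s => ∑ j, |Q s - γ| / A s j)
        (fun s _ => Finset.sum_nonneg fun j _ => div_nonneg (abs_nonneg _) (hA s j))
        (Finset.mem_univ s))
  exact le_add_mulVec_of_ne_zero hA hβ_nonneg hAj hjM

end Matrix

theorem stmt_1_general
    {I σ : Type*} [Fintype I] [Fintype σ]
    (ζ : σ → I → ℝ) (hζ : ∀ s i, ζ s i = 0 ∨ ζ s i = 1)
    (Q : σ → ℝ) (μ : I → ℝ) (hμ : ∀ i, 0 ≤ μ i)
    (D : Set (σ → ℝ))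
    (hD : D = {p : σ → ℝ | (∀ s, 0 ≤ p s) ∧ (∑ s, p s) = 1 ∧
        ∀ i, (∑ s, p s * (1 - ζ s i)) ≤ μ i})
    (s₀ : σ) (hs₀ : ∀ i, ζ s₀ i = 1) :
    ∃ v : ℝ,
      IsLeast {x : ℝ | ∃ (γ : ℝ) (β : I → ℝ), (∀ i, 0 ≤ β i) ∧
          (∀ s, Q s ≤ γ + ∑ i, (1 - ζ s i) * β i) ∧
          x = γ + ∑ i, μ i * β i} v ∧
      sSup {x : ℝ | ∃ p ∈ D, x = ∑ s, p s * Q s} = v := by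
  classical
  let A : Matrix σ I ℝ := Matrix.of fun s i => 1 - ζ s i
  have hD' : ∀ p, p ∈ D ↔ p ∈ stdSimplex ℝ σ ∧ p ᵥ* A ≤ μ := fun p => by
    rw [hD]; exact and_assoc.symm
  have hweak : ∀ p ∈ D, ∀ γ β, 0 ≤ β → (∀ s, Q s ≤ γ + (A *ᵥ β) s) → p ⬝ᵥ Q ≤ γ + μ ⬝ᵥ β :=
    fun p hp _ _ => dotProduct_le_of_dual_feasible ((hD' p).1 hp).1 ((hD' p).1 hp).2
  set P := {x : ℝ | ∃ p ∈ D, x = ∑ s, p s * Q s}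
  obtain ⟨B, hB⟩ := (finite_range Q).bddAbove
  have hP : BddAbove P := ⟨B, by
    rintro _ ⟨p, hp, rfl⟩
    exact (hweak p hp B 0 le_rfl fun s => by simpa using hB ⟨s, rfl⟩).trans_eq (by simp)⟩
  obtain ⟨β, hβ, hQ⟩ := exists_dual_of_nonneg_of_row_eq_zero (A := A) (Q := Q) (V := sSup P)
    (fun s i => by rcases hζ s i with h | h <;> simp [A, h]) hμ (s₀ := s₀)
    (fun i => by simp [A, hs₀]) fun p hp hpA => le_csSup hP ⟨p, (hD' p).2 ⟨hp, hpA⟩, rfl⟩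
  refine ⟨sSup P, ⟨⟨_, β, hβ, hQ, (sub_add_cancel _ _).symm⟩, ?_⟩, rfl⟩
  rintro _ ⟨γ, β', hβ', hQ', rfl⟩
  have hs₀D : Pi.single s₀ 1 ∈ D := (hD' _).2 ⟨single_mem_stdSimplex ℝ s₀, fun i => by
    simp [A, hs₀, hμ i]⟩
  exact csSup_le ⟨_, _, hs₀D, rfl⟩ fun _ ⟨p, hp, hx⟩ => hx ▸ hweak p hp γ β' hβ' hQ'

/-- The worst-case expectation equals the minimum of
γ + Σ_i μ_i β_i over dual-feasible (γ, β), and this minimum is attained. -/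
theorem stmt_1
    {I σ : Type*} [Fintype I] [Fintype σ] [Nonempty I] [Nonempty σ]
    (ζ : σ → I → ℝ) (hζ : ∀ s i, ζ s i = 0 ∨ ζ s i = 1)
    (Q : σ → ℝ) (μ : I → ℝ) (hμ : ∀ i, 0 ≤ μ i)
    (D : Set (σ → ℝ))
    (hD : D = {p : σ → ℝ | (∀ s, 0 ≤ p s) ∧ (∑ s, p s) = 1 ∧
        ∀ i, (∑ s, p s * (1 - ζ s i)) ≤ μ i})
    (s₀ : σ) (hs₀ : ∀ i, ζ s₀ i = 1) :
    ∃ v : ℝ,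
      IsLeast {x : ℝ | ∃ (γ : ℝ) (β : I → ℝ), (∀ i, 0 ≤ β i) ∧
          (∀ s, Q s ≤ γ + ∑ i, (1 - ζ s i) * β i) ∧
          x = γ + ∑ i, μ i * β i} v ∧
      sSup {x : ℝ | ∃ p ∈ D, x = ∑ s, p s * Q s} = v :=
  stmt_1_general ζ hζ Q μ hμ D hD s₀ hs₀
end

section
/- (Reformulation of the two-stage distributionally robust model as a single robust problem.) The two-stage distributionally robust optimal value equals the optimal value of the combined min–max problem: min_{g ∈ 𝒢} sup_{p ∈ D(g)} Σ_{s∈σ(g)} p(s)·Q_g(s) = inf over all pairs (g, β) with g ∈ 𝒢 and β : I → ℝ, β_i ≥ 0 for all i, of max_{s∈σ(g)} [ Q_g(s) + Σ_{i∈I} (μ_i + ζ_g(s)_i − 1)·β_i ]. -/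
/-!
For a fixed configuration, the worst-case expectation over the moment-based ambiguity set is a
linear program over the probability simplex, and the robust objective on the right is its
Lagrangian dual: `β` prices the moment constraints, and maximising the Lagrangian over the
simplex picks out the worst scenario. Weak duality is immediate. Strong duality comes from Sion's
minimax theorem applied on the compact simplex times the nonnegative orthant. Finally, the minimum
over the finitely many configurations commutes with the infimum over `β`.
-/

open Finset Matrix

section

variable {E : Type*} [AddCommGroup E] [Module ℝ E]

lemma quasilinearOn_coe_ereal_of_affine {s : Set E} (hs : Convex ℝ s) {g : E → ℝ}
    (hg : ∀ x y : E, ∀ a b : ℝ, a + b = 1 → g (a • x + b • y) = a * g x + b * g y) :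
    QuasilinearOn ℝ s fun x => (g x : EReal) :=
  have hconvex : ConvexOn ℝ s g := ⟨hs, fun x _ y _ a b _ _ hab => (hg x y a b hab).le⟩
  have hconcave : ConcaveOn ℝ s g := ⟨hs, fun x _ y _ a b _ _ hab => (hg x y a b hab).ge⟩
  ⟨hconvex.quasiconvexOn.monotone_comp (g := Real.toEReal) EReal.coe_strictMono.monotone,
    hconcave.quasiconcaveOn.monotone_comp (g := Real.toEReal) EReal.coe_strictMono.monotone⟩

end

section

variable {S ι : Type*} [Fintype S] [Fintype ι]

lemma dotProduct_le_iSup_of_mem_stdSimplex {p : S → ℝ} (hp : p ∈ stdSimplex ℝ S)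
    (w : S → ℝ) : p ⬝ᵥ w ≤ ⨆ s, w s :=
  calc p ⬝ᵥ w ≤ ∑ s, p s * ⨆ t, w t :=
        sum_le_sum fun s _ => mul_le_mul_of_nonneg_left
          (le_ciSup (Finite.bddAbove_range w) s) (hp.1 s)
    _ = ⨆ s, w s := by rw [← sum_mul, hp.2, one_mul]

variable (a : S → ι → ℝ) (μ : ι → ℝ) (c : S → ℝ)

/-- With `a s i = 1 - ζ_g(s)_i` this is the ambiguity set `D(g)`, and `penalizedCost` below is
the bracket of the robust objective, `μ i + ζ_g(s)_i - 1` being written as `μ i - a s i`. -/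
def momentSet : Set (S → ℝ) :=
  {p | (∀ s, 0 ≤ p s) ∧ ∑ s, p s = 1 ∧ ∀ i, ∑ s, p s * a s i ≤ μ i}

def penalizedCost (β : ι → ℝ) (s : S) : ℝ := c s + ∑ i, (μ i - a s i) * β i

variable {a μ c}

omit [Fintype S] in
lemma penalizedCost_eq_add_mulVec (β : ι → ℝ) :
    penalizedCost a μ c β = c + Matrix.of (fun s i => μ i - a s i) *ᵥ β := rfl

lemma dotProduct_penalizedCost {p : S → ℝ} (hp : ∑ s, p s = 1) (β : ι → ℝ) :
    p ⬝ᵥ penalizedCost a μ c β = p ⬝ᵥ c + ∑ i, (μ i - ∑ s, p s * a s i) * β i := by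
  rw [penalizedCost_eq_add_mulVec, dotProduct_add, dotProduct_mulVec]
  congr 1
  refine sum_congr rfl fun i _ => ?_
  simp [vecMul, dotProduct, mul_sub, sum_sub_distrib, ← sum_mul, hp]

lemma dotProduct_le_iSup_penalizedCost {p : S → ℝ} (hp : p ∈ momentSet a μ) {β : ι → ℝ}
    (hβ : ∀ i, 0 ≤ β i) : p ⬝ᵥ c ≤ ⨆ s, penalizedCost a μ c β s := by
  obtain ⟨hp₀, hp₁, hpμ⟩ := hp
  calc p ⬝ᵥ c ≤ p ⬝ᵥ penalizedCost a μ c β := by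
        rw [dotProduct_penalizedCost hp₁]
        exact le_add_of_nonneg_right <|
          sum_nonneg fun i _ => mul_nonneg (sub_nonneg.2 (hpμ i)) (hβ i)
    _ ≤ ⨆ s, penalizedCost a μ c β s :=
        dotProduct_le_iSup_of_mem_stdSimplex ⟨hp₀, hp₁⟩ _

lemma exists_dotProduct_penalizedCost_le {v : ℝ} (hv : ∀ p ∈ momentSet a μ, p ⬝ᵥ c ≤ v)
    {p : S → ℝ} (hp : p ∈ stdSimplex ℝ S) :
    ∃ β ∈ Set.Ici (0 : ι → ℝ), p ⬝ᵥ penalizedCost a μ c β ≤ v := by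
  classical
  by_cases hfeas : ∀ i, ∑ s, p s * a s i ≤ μ i
  · refine ⟨0, Set.self_mem_Ici, ?_⟩
    simpa [dotProduct_penalizedCost hp.2] using hv p ⟨hp.1, hp.2, hfeas⟩
  push Not at hfeas
  obtain ⟨i, hi⟩ := hfeas
  set m := max (p ⬝ᵥ c - v) 0
  set d := ∑ s, p s * a s i - μ i
  have hd : 0 < d := sub_pos.2 hi
  refine ⟨(m / d) • Pi.single i 1, ?_, ?_⟩
  · exact Set.mem_Ici.2 <|
      smul_nonneg (div_nonneg (le_max_right _ _) hd.le) (Pi.single_nonneg.2 zero_le_one)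
  have hdrop : (μ i - ∑ s, p s * a s i) * (m / d) = -m := by
    field_simp
    ring
  rw [dotProduct_penalizedCost hp.2]
  simp only [Pi.smul_apply, Pi.single_apply, smul_eq_mul, mul_ite, mul_one, mul_zero,
    sum_ite_eq', mem_univ, if_true, hdrop]
  linarith [le_max_left (p ⬝ᵥ c - v) 0]

lemma exists_forall_penalizedCost_lt [Nonempty S] {v w : ℝ}
    (hv : ∀ p ∈ momentSet a μ, p ⬝ᵥ c ≤ v) (hvw : v < w) :
    ∃ β : ι → ℝ, (∀ i, 0 ≤ β i) ∧ ∀ s, penalizedCost a μ c β s < w := by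
  classical
  -- `⨆ β ∈ Set.Ici 0, L p β = ⊤` for `p` outside `momentSet a μ`, hence `EReal`.
  set L : (S → ℝ) → (ι → ℝ) → EReal :=
    fun p β => ((-(p ⬝ᵥ penalizedCost a μ c β) : ℝ) : EReal)
  have hminimax : ⨅ p ∈ stdSimplex ℝ S, ⨆ β ∈ Set.Ici 0, L p β
      = ⨆ β ∈ Set.Ici 0, ⨅ p ∈ stdSimplex ℝ S, L p β := by
    refine Sion.minimax' ⟨_, single_mem_stdSimplex ℝ (Classical.arbitrary S)⟩
      (convex_stdSimplex ℝ S) (isCompact_stdSimplex ℝ S) (fun β _ => ?_) (fun β _ => ?_)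
      (convex_Ici 0) (fun p _ => ?_) (fun p _ => ?_)
    · exact (continuous_coe_real_ereal.comp (continuous_id.dotProduct continuous_const).neg)
        |>.lowerSemicontinuous.lowerSemicontinuousOn _
    · refine (quasilinearOn_coe_ereal_of_affine (convex_stdSimplex ℝ S) fun x y r t _ => ?_).1
      simp only [add_dotProduct, smul_dotProduct, smul_eq_mul]
      ring
    · simp only [L, penalizedCost_eq_add_mulVec]
      exact (continuous_coe_real_ereal.comp (by fun_prop))
        |>.upperSemicontinuous.upperSemicontinuousOn _
    · refine (quasilinearOn_coe_ereal_of_affine (convex_Ici 0) fun x y r t hrt => ?_).2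
      simp only [penalizedCost_eq_add_mulVec, mulVec_add, mulVec_smul, dotProduct_add,
        dotProduct_smul, smul_eq_mul]
      linear_combination (p ⬝ᵥ c) * hrt
  have hinner (p) (hp : p ∈ stdSimplex ℝ S) :
      ((-v : ℝ) : EReal) ≤ ⨆ β ∈ Set.Ici 0, L p β := by
    obtain ⟨β, hβ, hle⟩ := exists_dotProduct_penalizedCost_le hv hp
    exact le_iSup₂_of_le β hβ (EReal.coe_le_coe_iff.2 (neg_le_neg hle))
  have hlt : ((-w : ℝ) : EReal) < ⨆ β ∈ Set.Ici 0, ⨅ p ∈ stdSimplex ℝ S, L p β :=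
    hminimax ▸ (EReal.coe_lt_coe_iff.2 (neg_lt_neg hvw)).trans_le (le_iInf₂ hinner)
  obtain ⟨β, hβ, hβw⟩ := lt_biSup_iff.1 hlt
  refine ⟨β, hβ, fun s => ?_⟩
  have := hβw.trans_le (iInf₂_le _ (single_mem_stdSimplex ℝ s))
  simpa [L, single_dotProduct] using this

omit [Fintype ι] in
lemma single_mem_momentSet [DecidableEq S] {s : S} (hs : ∀ i, a s i ≤ μ i) :
    Pi.single s 1 ∈ momentSet a μ :=
  ⟨(single_mem_stdSimplex ℝ s).1, (single_mem_stdSimplex ℝ s).2,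
    by simpa [Pi.single_apply] using hs⟩

lemma isGLB_iSup_penalizedCost [Nonempty S] (hne : (momentSet a μ).Nonempty) :
    IsGLB {x | ∃ β : ι → ℝ, (∀ i, 0 ≤ β i) ∧ x = ⨆ s, penalizedCost a μ c β s}
      (sSup {x | ∃ p ∈ momentSet a μ, x = p ⬝ᵥ c}) := by
  set P := {x | ∃ p ∈ momentSet a μ, x = p ⬝ᵥ c}
  have hweak (β : ι → ℝ) (hβ : ∀ i, 0 ≤ β i) :
      ∀ x ∈ P, x ≤ ⨆ s, penalizedCost a μ c β s := by
    rintro _ ⟨p, hp, rfl⟩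
    exact dotProduct_le_iSup_penalizedCost hp hβ
  obtain ⟨p₀, hp₀⟩ := hne
  have hPne : P.Nonempty := ⟨_, p₀, hp₀, rfl⟩
  have hPbdd : BddAbove P := ⟨_, hweak 0 fun _ => le_rfl⟩
  refine ⟨?_, fun b hb => le_of_forall_pos_le_add fun ε hε => ?_⟩
  · rintro _ ⟨β, hβ, rfl⟩
    exact csSup_le hPne (hweak β hβ)
  obtain ⟨β, hβ, hlt⟩ := exists_forall_penalizedCost_lt (a := a) (μ := μ) (c := c)
    (fun p hp => le_csSup hPbdd ⟨p, hp, rfl⟩) (lt_add_of_pos_right _ hε)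
  exact (hb ⟨β, hβ, rfl⟩).trans (ciSup_le fun s => (hlt s).le)

end

theorem stmt_4_general
    {I G : Type*} [Fintype I] [Fintype G] [Nonempty G]
    (μ : I → ℝ) (hμ : ∀ i, 0 ≤ μ i)
    (σ : G → Type*) [∀ g, Fintype (σ g)] [∀ g, Nonempty (σ g)]
    (ζ : (g : G) → σ g → I → ℝ)
    (Q : (g : G) → σ g → ℝ)
    (s₀ : (g : G) → σ g) (hs₀ : ∀ g i, ζ g (s₀ g) i = 1)
    (D : (g : G) → Set (σ g → ℝ))
    (hD : ∀ g, D g = {p : σ g → ℝ | (∀ s, 0 ≤ p s) ∧ (∑ s, p s) = 1 ∧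
        ∀ i, (∑ s, p s * (1 - ζ g s i)) ≤ μ i}) :
    (⨅ g : G, sSup {x : ℝ | ∃ p ∈ D g, x = ∑ s, p s * Q g s}) =
      sInf {x : ℝ | ∃ (g : G) (β : I → ℝ), (∀ i, 0 ≤ β i) ∧
        x = ⨆ s : σ g, (Q g s + ∑ i, (μ i + ζ g s i - 1) * β i)} := by
  classical
  have hconfig (g : G) : IsGLB {x | ∃ β : I → ℝ, (∀ i, 0 ≤ β i) ∧
      x = ⨆ s : σ g, (Q g s + ∑ i, (μ i + ζ g s i - 1) * β i)}
      (sSup {x : ℝ | ∃ p ∈ D g, x = ∑ s, p s * Q g s}) := by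
    have hdirac : Pi.single (s₀ g) 1 ∈ momentSet (fun s i => 1 - ζ g s i) μ :=
      single_mem_momentSet fun i => by simpa [hs₀] using hμ i
    have := isGLB_iSup_penalizedCost (c := Q g) ⟨_, hdirac⟩
    simp only [penalizedCost, sub_sub_eq_add_sub] at this
    rwa [hD g]
  have hunion := (isGLB_iUnion_iff_of_isGLB hconfig _).1 (isGLB_ciInf (Finite.bddBelow_range _))
  refine (IsGLB.csInf_eq ?_ ?_).symm
  · convert hunion using 1
    ext
    simp only [Set.mem_iUnion, Set.mem_ofPred_eq]
  · exact ⟨_, Classical.arbitrary G, 0, fun _ => le_rfl, rfl⟩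

/-- The two-stage distributionally robust model equals the
combined min–max robust reformulation. -/
theorem stmt_4
    {I G : Type*} [Fintype I] [Nonempty I] [Fintype G] [Nonempty G]
    (μ : I → ℝ) (hμ : ∀ i, 0 ≤ μ i)
    (σ : G → Type*) [∀ g, Fintype (σ g)] [∀ g, Nonempty (σ g)]
    (ζ : (g : G) → σ g → I → ℝ) (hζ : ∀ g s i, ζ g s i = 0 ∨ ζ g s i = 1)
    (Q : (g : G) → σ g → ℝ)
    (s₀ : (g : G) → σ g) (hs₀ : ∀ g i, ζ g (s₀ g) i = 1)
    (D : (g : G) → Set (σ g → ℝ))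
    (hD : ∀ g, D g = {p : σ g → ℝ | (∀ s, 0 ≤ p s) ∧ (∑ s, p s) = 1 ∧
        ∀ i, (∑ s, p s * (1 - ζ g s i)) ≤ μ i}) :
    (⨅ g : G, sSup {x : ℝ | ∃ p ∈ D g, x = ∑ s, p s * Q g s}) =
      sInf {x : ℝ | ∃ (g : G) (β : I → ℝ), (∀ i, 0 ≤ β i) ∧
        x = ⨆ s : σ g, (Q g s + ∑ i, (μ i + ζ g s i - 1) * β i)} :=
  stmt_4_general μ hμ σ ζ Q s₀ hs₀ D hD
end

section
/- (Unit-demand flow conservation forces reachability.) Let V be a finite vertex set, s ∈ V, and f : V → V → ℝ with f(m, n) ≥ 0 for all m, n ∈ V. Suppose that for every vertex n ∈ V with n ≠ s, the net inflow at n equals one: Σ_{m∈V} f(m, n) − Σ_{m∈V} f(n, m) = 1. Then every vertex n ∈ V is reachable from s along arcs carrying positive flow, i.e., for every n ∈ V there is a finite sequence s = v₀, v₁, …, v_k = n with f(v_{j}, v_{j+1}) > 0 for all j (equivalently, the reflexive–transitive closure of the relation 'f(a, b) > 0' relates s to n). -/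
/-!
The vertices not reachable from `s` form a set `T` that avoids `s` and into which no positive
flow enters. Summing the conservation law over `T`, the flow on arcs inside `T` cancels, so
`#T` equals the inflow into `T` (zero) minus the outflow from `T` (nonnegative); hence `T = ∅`.
-/

open Finset

section NetInflow

variable {V : Type*} [Fintype V]

def netInflow {M : Type*} [AddCommGroup M] (f : V → V → M) (n : V) : M :=
  ∑ m, f m n - ∑ m, f n m

theorem sum_netInflow_eq_cut {M : Type*} [AddCommGroup M] [DecidableEq V]
    (f : V → V → M) (T : Finset V) :
    ∑ n ∈ T, netInflow f n = ∑ n ∈ T, ∑ m ∈ Tᶜ, f m n - ∑ n ∈ T, ∑ m ∈ Tᶜ, f n m := by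
  have split (g : V → V → M) :
      ∑ n ∈ T, ∑ m, g n m = ∑ n ∈ T, ∑ m ∈ T, g n m + ∑ n ∈ T, ∑ m ∈ Tᶜ, g n m := by
    rw [← sum_add_distrib]
    exact sum_congr rfl fun n _ => (sum_add_sum_compl T _).symm
  have inner : ∑ n ∈ T, ∑ m ∈ T, f m n = ∑ n ∈ T, ∑ m ∈ T, f n m := sum_comm
  simp only [netInflow, sum_sub_distrib]
  rw [split (fun n m => f m n), split f, inner]
  abel

theorem sum_netInflow_nonpos_of_no_inflow {M : Type*} [AddCommGroup M] [PartialOrder M]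
    [IsOrderedAddMonoid M] [DecidableEq V] {f : V → V → M}
    (hf : ∀ m n, 0 ≤ f m n) {T : Finset V} (hT : ∀ m ∉ T, ∀ n ∈ T, f m n = 0) :
    ∑ n ∈ T, netInflow f n ≤ 0 := by
  have inflow : ∑ n ∈ T, ∑ m ∈ Tᶜ, f m n = 0 :=
    sum_eq_zero fun n hn => sum_eq_zero fun m hm => hT m (mem_compl.mp hm) n hn
  have outflow : 0 ≤ ∑ n ∈ T, ∑ m ∈ Tᶜ, f n m :=
    sum_nonneg fun n _ => sum_nonneg fun m _ => hf n m
  rwa [sum_netInflow_eq_cut, inflow, zero_sub, neg_nonpos]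

end NetInflow

/-- Unit-demand flow conservation forces reachability from the
root along arcs carrying positive flow. -/
theorem stmt_10
    {V : Type*} [Fintype V]
    (s : V) (f : V → V → ℝ)
    (hf : ∀ m n : V, 0 ≤ f m n)
    (hcons : ∀ n : V, n ≠ s → (∑ m, f m n) - (∑ m, f n m) = 1) :
    ∀ n : V, Relation.ReflTransGen (fun a b => 0 < f a b) s n := by
  classical
  by_contra! ⟨n₀, hn₀⟩
  let T : Finset V := {v | ¬Relation.ReflTransGen (fun a b => 0 < f a b) s v}
  have hs : s ∉ T := by simp [T, Relation.ReflTransGen.refl]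
  have no_inflow : ∀ m ∉ T, ∀ n ∈ T, f m n = 0 := by
    intro m hm n hn
    simp only [T, mem_filter, mem_univ, true_and, not_not] at hm hn
    exact le_antisymm (not_lt.mp fun hpos => hn (hm.tail hpos)) (hf m n)
  have demand : ∑ n ∈ T, netInflow f n = #T :=
    (sum_congr rfl fun n hn => hcons n (ne_of_mem_of_not_mem hn hs)).trans (by simp)
  have hT : 0 < #T := card_pos.mpr ⟨n₀, by simpa [T] using hn₀⟩
  have : (#T : ℝ) ≤ 0 := demand ▸ sum_netInflow_nonpos_of_no_inflow hf no_inflow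
  exact hT.not_ge (mod_cast this)
end

section
/- (Correctness of the single-commodity flow formulation, forward direction.) Let V be a finite vertex set, s ∈ V, and G a simple graph on V with exactly |V| − 1 edges. Suppose there exists f : V → V → ℝ with f(m, n) ≥ 0 for all m, n, such that f(m, n) = 0 whenever m and n are not adjacent in G, and such that for every vertex n ≠ s the net inflow equals one: Σ_{m∈V} f(m, n) − Σ_{m∈V} f(n, m) = 1. Then G is a tree (connected and acyclic), i.e., G is a spanning tree of the candidate network. -/
/-!
Let `S` be the set of vertices not reachable from `s`. No edge joins `S` to its complement, so
no flow crosses the boundary of `S` and the net inflows over `S` cancel in pairs; but each of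
them is `1`, so `S` is empty and `G` is connected. A connected graph on `|V|` vertices with
`|V| - 1` edges is a tree.
-/

open Finset

theorem Finset.sum_netInflow_eq_zero_of_no_crossing {α M : Type*} [Fintype α] [AddCommGroup M]
    (S : Finset α) (f : α → α → M) (hcross : ∀ m ∈ S, ∀ n ∉ S, f m n = 0 ∧ f n m = 0) :
    ∑ n ∈ S, (∑ m, f m n - ∑ m, f n m) = 0 := by
  have hrestrict : ∀ n ∈ S, ∑ m, f m n - ∑ m, f n m = ∑ m ∈ S, f m n - ∑ m ∈ S, f n m := by
    intro n hn
    rw [← sum_subset (subset_univ S) fun m _ hm => (hcross n hn m hm).2,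
      ← sum_subset (subset_univ S) fun m _ hm => (hcross n hn m hm).1]
  rw [sum_congr rfl hrestrict, sum_sub_distrib, sum_comm, sub_self]

namespace SimpleGraph

variable {V : Type*} [Fintype V]

theorem reachable_of_unit_demand_flow {R : Type*} [AddCommGroupWithOne R] [CharZero R]
    (G : SimpleGraph V) (s : V) (f : V → V → R) (hsupp : ∀ m n, ¬G.Adj m n → f m n = 0)
    (hdemand : ∀ n, n ≠ s → ∑ m, f m n - ∑ m, f n m = 1) (v : V) : G.Reachable s v := by
  classical
  by_contra hv
  set S : Finset V := {n | ¬G.Reachable s n}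
  have hcross : ∀ m ∈ S, ∀ n ∉ S, f m n = 0 ∧ f n m = 0 := by
    intro m hm n hn
    simp only [S, mem_filter, mem_univ, true_and, not_not] at hm hn
    exact ⟨hsupp m n fun h => hm (hn.trans h.symm.reachable),
      hsupp n m fun h => hm (hn.trans h.reachable)⟩
  have hunit : ∀ n ∈ S, ∑ m, f m n - ∑ m, f n m = 1 := by
    intro n hn
    refine hdemand n fun hns => ?_
    simp only [S, mem_filter, mem_univ, true_and, hns] at hn
    exact hn (Reachable.refl s)
  have hcard : (#S : R) = 0 := by
    rw [← S.sum_netInflow_eq_zero_of_no_crossing f hcross, sum_congr rfl hunit,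
      sum_const, nsmul_one]
  have hvS : v ∈ S := by simpa [S] using hv
  exact (S.card_ne_zero_of_mem hvS) (Nat.cast_eq_zero.mp hcard)

theorem connected_of_unit_demand_flow {R : Type*} [AddCommGroupWithOne R] [CharZero R]
    (G : SimpleGraph V) (s : V) (f : V → V → R) (hsupp : ∀ m n, ¬G.Adj m n → f m n = 0)
    (hdemand : ∀ n, n ≠ s → ∑ m, f m n - ∑ m, f n m = 1) : G.Connected :=
  have hreach := G.reachable_of_unit_demand_flow s f hsupp hdemand
  (connected_iff G).mpr ⟨fun u v => (hreach u).symm.trans (hreach v), ⟨s⟩⟩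

theorem isTree_of_connected_of_card_edgeFinset (G : SimpleGraph V) [Fintype G.edgeSet]
    (hconn : G.Connected) (hcard : #G.edgeFinset = Fintype.card V - 1) : G.IsTree := by
  have hV : 0 < Fintype.card V := Fintype.card_pos_iff.mpr hconn.nonempty
  rw [isTree_iff_connected_and_card, Nat.card_eq_fintype_card, Nat.card_eq_fintype_card,
    ← edgeFinset_card, hcard]
  exact ⟨hconn, Nat.sub_add_cancel hV⟩

end SimpleGraph

/-- Correctness of the single-commodity flow formulation,
forward direction: a graph with |V| - 1 edges supporting a unit-demand flow
rooted at s is a spanning tree. -/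
theorem stmt_11
    {V : Type*} [Fintype V]
    (s : V) (G : SimpleGraph V) [Fintype G.edgeSet]
    (hcard : G.edgeFinset.card = Fintype.card V - 1)
    (hflow : ∃ f : V → V → ℝ,
        (∀ m n : V, 0 ≤ f m n) ∧
        (∀ m n : V, ¬ G.Adj m n → f m n = 0) ∧
        (∀ n : V, n ≠ s → (∑ m, f m n) - (∑ m, f n m) = 1)) :
    G.IsTree := by
  obtain ⟨f, -, hsupp, hdemand⟩ := hflow
  exact G.isTree_of_connected_of_card_edgeFinset
    (G.connected_of_unit_demand_flow s f hsupp hdemand) hcard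
end

section
/- (Correctness of the single-commodity flow formulation, converse direction.) Let V be a finite vertex set, G a tree on V (a connected acyclic simple graph), and s ∈ V. Then there exists f : V → V → ℝ such that: f(m, n) ≥ 0 for all m, n ∈ V; f(m, n) = 0 whenever m and n are not adjacent in G; f(m, n) ≤ |V| − 1 for all m, n ∈ V; Σ_{n∈V} f(s, n) − Σ_{n∈V} f(n, s) = |V| − 1; and for every vertex n ≠ s the net inflow equals one: Σ_{m∈V} f(m, n) − Σ_{m∈V} f(n, m) = 1. -/
/-!
Send one unit of flow from `s` to every vertex `v` along a path `P v`. A walk from `u` to `v`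
has net inflow `1` at `v` and `-1` at `u` (and none elsewhere), so the sum of these flows has net
inflow `1` at every `n ≠ s` and `1 - |V|` at `s`. A path crosses each arc at most once and the
path from `s` to itself is trivial, so no arc carries more than `|V| - 1`.
-/

open SimpleGraph Finset

namespace SimpleGraph.Walk

variable {V : Type*} [DecidableEq V] {G : SimpleGraph V}

def arcFlow {u v : V} (w : G.Walk u v) (m n : V) : ℝ :=
  (w.darts.map Dart.toProd).count (m, n)

lemma arcFlow_nonneg {u v : V} (w : G.Walk u v) (m n : V) : 0 ≤ w.arcFlow m n := by
  unfold arcFlow; positivity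

@[simp]
lemma arcFlow_nil {u : V} (m n : V) : (nil : G.Walk u u).arcFlow m n = 0 := by
  simp [arcFlow]

lemma arcFlow_cons {u v w : V} (h : G.Adj u v) (p : G.Walk v w) (m n : V) :
    (cons h p).arcFlow m n = p.arcFlow m n + if (m, n) = (u, v) then 1 else 0 := by
  by_cases hmn : (m, n) = (u, v)
  · simp [arcFlow, hmn]
  · simp [arcFlow, hmn, Ne.symm hmn]

lemma arcFlow_eq_zero_of_not_adj {u v : V} (w : G.Walk u v) {m n : V} (h : ¬ G.Adj m n) :
    w.arcFlow m n = 0 := by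
  simp only [arcFlow, Nat.cast_eq_zero, List.count_eq_zero, List.mem_map, not_exists, not_and]
  rintro ⟨⟨m', n'⟩, hadj⟩ - hd
  obtain ⟨rfl, rfl⟩ := Prod.ext_iff.mp hd
  exact h hadj

lemma IsPath.arcFlow_le_one {u v : V} {w : G.Walk u v} (hw : w.IsPath) (m n : V) :
    w.arcFlow m n ≤ 1 := by
  have hnodup : (w.darts.map Dart.toProd).Nodup :=
    (darts_nodup_of_support_nodup hw.support_nodup).map Dart.toProd_injective
  unfold arcFlow
  exact_mod_cast List.nodup_iff_count_le_one.mp hnodup (m, n)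

lemma arcFlow_netInflow [Fintype V] {u v : V} (w : G.Walk u v) (n : V) :
    ∑ m, w.arcFlow m n - ∑ m, w.arcFlow n m
      = (if n = v then 1 else 0) - (if n = u then 1 else 0) := by
  induction w with
  | nil => simp
  | @cons a b c h p ih =>
    simp only [arcFlow_cons, sum_add_distrib, Prod.mk.injEq, ite_and, sum_ite_eq', mem_univ,
      if_true, sum_ite_irrel, sum_const_zero]
    split_ifs at ih ⊢ <;> linarith

end SimpleGraph.Walk

namespace SimpleGraph

variable {V : Type*} [Fintype V] [DecidableEq V] {G : SimpleGraph V} {s : V}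

def sumArcFlow (P : ∀ v, G.Walk s v) (m n : V) : ℝ :=
  ∑ v, (P v).arcFlow m n

lemma sumArcFlow_netInflow (P : ∀ v, G.Walk s v) (n : V) :
    ∑ m, sumArcFlow P m n - ∑ m, sumArcFlow P n m
      = 1 - if n = s then (Fintype.card V : ℝ) else 0 := by
  simp only [sumArcFlow]
  rw [sum_comm, sum_comm (f := fun m v => (P v).arcFlow n m), ← sum_sub_distrib]
  simp only [Walk.arcFlow_netInflow, sum_sub_distrib, sum_ite_eq, mem_univ, if_true,
    sum_ite_irrel, sum_const, card_univ, nsmul_eq_mul, mul_one, mul_zero]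

lemma sumArcFlow_le {P : ∀ v, G.Walk s v} (hP : ∀ v, (P v).IsPath) (m n : V) :
    sumArcFlow P m n ≤ Fintype.card V - 1 := by
  have hnil : P s = .nil := (Walk.isPath_iff_nil.mp (hP s)).eq_nil
  calc sumArcFlow P m n = ∑ v ∈ univ.erase s, (P v).arcFlow m n := by
        rw [sumArcFlow, ← add_sum_erase _ _ (mem_univ s), hnil, Walk.arcFlow_nil, zero_add]
    _ ≤ ∑ v ∈ univ.erase s, 1 := sum_le_sum fun v _ => (hP v).arcFlow_le_one m n
    _ = Fintype.card V - 1 := by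
        rw [sum_const, card_erase_of_mem (mem_univ s), card_univ, nsmul_one,
          Nat.cast_pred (Fintype.card_pos_iff.mpr ⟨s⟩)]

end SimpleGraph

/-- Correctness of the single-commodity flow formulation,
converse direction: every tree supports a unit-demand flow rooted at s. -/
theorem stmt_12
    {V : Type*} [Fintype V]
    (G : SimpleGraph V) (hG : G.IsTree) (s : V) :
    ∃ f : V → V → ℝ,
      (∀ m n : V, 0 ≤ f m n) ∧
      (∀ m n : V, ¬ G.Adj m n → f m n = 0) ∧
      (∀ m n : V, f m n ≤ (Fintype.card V : ℝ) - 1) ∧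
      ((∑ n, f s n) - (∑ n, f n s) = (Fintype.card V : ℝ) - 1) ∧
      (∀ n : V, n ≠ s → (∑ m, f m n) - (∑ m, f n m) = 1) := by
  classical
  choose P hP using hG.connected.exists_isPath s
  refine ⟨sumArcFlow P, fun m n => sum_nonneg fun v _ => (P v).arcFlow_nonneg m n,
    fun m n h => sum_eq_zero fun v _ => (P v).arcFlow_eq_zero_of_not_adj h,
    sumArcFlow_le hP, ?_, fun n hn => ?_⟩
  · have hs := sumArcFlow_netInflow P s
    rw [if_pos rfl] at hs
    linarith
  · simpa [hn] using sumArcFlow_netInflow P n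
end
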